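/- arXiv:2502.00917 — 5 statements merged into one kernel-verified Lean document; each statement's English description precedes it below -/
import Mathlib

section
/- If (X, d) is a compact metric space and (X, μ, T) is a measure-theoretically rigid measure-preserving system, then for every ε > 0 there exists s ∈ ℕ such that μ({x ∈ X : d(T^s(x), x) < ε}) > 1 − ε. -/
open MeasureTheory Filter Topology
open scoped ENNReal

theorem stmt_1 {X : Type*} [MetricSpace X] [CompactSpace X] [MeasurableSpace X] [BorelSpace X]
    (μ : Measure X) [IsProbabilityMeasure μ] (T : X → X) (hT : MeasurePreserving T μ μ)
    (hrig : ∃ t : ℕ → ℕ, Tendsto t atTop atTop ∧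
      ∀ A : Set X, MeasurableSet A →
        Tendsto (fun n => μ (symmDiff (T^[t n] ⁻¹' A) A)) atTop (𝓝 0)) :
    ∀ ε : ℝ, 0 < ε → ∃ s : ℕ,
      1 - ENNReal.ofReal ε < μ {x : X | dist (T^[s] x) x < ε} := by
  obtain ⟨t, ht, hA⟩ := hrig
  intro ε hε
  set δ := min ε 1 with hδdef
  have hδ : 0 < δ := lt_min hε one_pos
  have hδ1 : δ ≤ 1 := min_le_right _ _
  have hδε : δ ≤ ε := min_le_left _ _
  -- finite cover by balls of radius δ/3
  have hcov : (Set.univ : Set X) ⊆ ⋃ x : X, Metric.ball x (δ / 3) := fun x _ =>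
    Set.mem_iUnion.2 ⟨x, Metric.mem_ball_self (by positivity)⟩
  obtain ⟨F, hF⟩ := isCompact_univ.elim_finite_subcover (fun x : X => Metric.ball x (δ / 3))
    (fun x => Metric.isOpen_ball) hcov
  classical
  set l := F.toList with hl
  set k := l.length with hk
  set f : ℕ → Set X := fun n => if h : n < k then Metric.ball (l.get ⟨n, h⟩) (δ / 3) else ∅
    with hf
  have hfmeas : ∀ n, MeasurableSet (f n) := by
    intro n
    simp only [hf]
    split
    · exact Metric.isOpen_ball.measurableSet
    · exact MeasurableSet.empty
  have hfcover : (Set.univ : Set X) ⊆ ⋃ n, f n := by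
    intro x hx
    have := hF (Set.mem_univ x)
    simp only [Set.mem_iUnion] at this
    obtain ⟨c, hc, hxc⟩ := this
    obtain ⟨i, hi⟩ := List.mem_iff_get.1 (Finset.mem_toList.2 hc)
    refine Set.mem_iUnion.2 ⟨i.1, ?_⟩
    simp only [hf]
    rw [dif_pos i.2]
    rw [← hi] at hxc
    exact hxc
  set A : ℕ → Set X := disjointed f with hAdef
  have hAmeas : ∀ n, MeasurableSet (A n) := MeasurableSet.disjointed hfmeas
  have hAsub : ∀ n, A n ⊆ f n := fun n => disjointed_subset f n
  have hAcover : (Set.univ : Set X) ⊆ ⋃ n, A n := by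
    rw [hAdef, iUnion_disjointed]; exact hfcover
  have hAempty : ∀ n, k ≤ n → A n = ∅ := by
    intro n hn
    refine Set.eq_empty_of_subset_empty ?_
    have : f n = ∅ := by simp [hf, not_lt.mpr hn]
    simpa [this] using hAsub n
  -- the sum of symmetric differences tends to 0
  have hsum : Tendsto (fun m => ∑ n ∈ Finset.range k,
      μ (symmDiff (T^[t m] ⁻¹' A n) (A n))) atTop (𝓝 0) := by
    have := tendsto_finset_sum (Finset.range k)
      (fun n _ => hA (A n) (hAmeas n))
    simpa using this
  have hδ0 : (0 : ℝ≥0∞) < ENNReal.ofReal δ := ENNReal.ofReal_pos.2 hδ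
  have hev : ∀ᶠ m in atTop, (∑ n ∈ Finset.range k,
      μ (symmDiff (T^[t m] ⁻¹' A n) (A n))) < ENNReal.ofReal δ :=
    hsum.eventually (gt_mem_nhds hδ0)
  obtain ⟨m, hm⟩ := hev.exists
  refine ⟨t m, ?_⟩
  set B : Set X := ⋃ n, A n ∩ T^[t m] ⁻¹' A n with hB
  have hBmeas : MeasurableSet B :=
    MeasurableSet.iUnion fun n =>
      (hAmeas n).inter ((hT.iterate (t m)).measurable (hAmeas n))
  -- complement bound
  have hcomp : Bᶜ ⊆ ⋃ n, (A n \ T^[t m] ⁻¹' A n) := by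
    intro x hx
    obtain ⟨n, hn⟩ := Set.mem_iUnion.1 (hAcover (Set.mem_univ x))
    refine Set.mem_iUnion.2 ⟨n, hn, fun hpre => ?_⟩
    exact hx (Set.mem_iUnion.2 ⟨n, hn, hpre⟩)
  have hμcomp : μ Bᶜ < ENNReal.ofReal δ := by
    calc μ Bᶜ ≤ ∑' n, μ (A n \ T^[t m] ⁻¹' A n) :=
          le_trans (measure_mono hcomp) (measure_iUnion_le _)
      _ = ∑ n ∈ Finset.range k, μ (A n \ T^[t m] ⁻¹' A n) := by
          refine tsum_eq_sum ?_
          intro n hn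
          rw [hAempty n (le_of_not_gt (fun h => hn (Finset.mem_range.2 h)))]
          simp
      _ ≤ ∑ n ∈ Finset.range k, μ (symmDiff (T^[t m] ⁻¹' A n) (A n)) := by
          refine Finset.sum_le_sum fun n _ => measure_mono fun x hx => ?_
          exact Or.inr hx
      _ < ENNReal.ofReal δ := hm
  -- B is in the target set
  have hBsub : B ⊆ {x : X | dist (T^[t m] x) x < ε} := by
    intro x hx
    obtain ⟨n, hxn, hxpre⟩ := Set.mem_iUnion.1 hx
    have h1 : x ∈ f n := hAsub n hxn
    have h2 : T^[t m] x ∈ f n := hAsub n hxpre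
    have hnk : n < k := by
      by_contra h
      rw [hAempty n (le_of_not_gt h)] at hxn
      exact hxn
    simp only [hf, dif_pos hnk, Metric.mem_ball] at h1 h2
    have : dist (T^[t m] x) x < δ / 3 + δ / 3 :=
      lt_of_le_of_lt (dist_triangle_right _ _ _) (add_lt_add h2 h1)
    have : dist (T^[t m] x) x < δ := by linarith
    exact lt_of_lt_of_le this hδε
  -- measure arithmetic
  have hμB : 1 < μ B + ENNReal.ofReal δ := by
    have h1 : μ B + μ Bᶜ = 1 := by
      rw [measure_add_measure_compl hBmeas]; exact measure_univ
    calc (1 : ℝ≥0∞) = μ B + μ Bᶜ := h1.symm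
      _ < μ B + ENNReal.ofReal δ :=
          ENNReal.add_lt_add_left (measure_ne_top μ B) hμcomp
  have hfin : 1 - ENNReal.ofReal δ < μ B := by
    refine ENNReal.sub_lt_of_lt_add ?_ hμB
    calc ENNReal.ofReal δ ≤ ENNReal.ofReal 1 := ENNReal.ofReal_le_ofReal hδ1
      _ = 1 := ENNReal.ofReal_one
  calc 1 - ENNReal.ofReal ε ≤ 1 - ENNReal.ofReal δ :=
        tsub_le_tsub_left (ENNReal.ofReal_le_ofReal hδε) 1
    _ < μ B := hfin
    _ ≤ μ {x : X | dist (T^[t m] x) x < ε} := measure_mono hBsub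
end

section
/- The twist map T(x, y) = (x, x + y mod 1) on [0,1] × S¹ with the product of Lebesgue measures is not partially measure-theoretically rigid: for every α > 0 there exists a measurable set A of positive measure such that μ(T^{-n}A ∩ A) < α μ(A) for all sufficiently large n. -/
/-!
The twist acts on the fibre over `x` as rotation by `x`, so `twist^[n]` is the skew product
`(x, y) ↦ (x, n • x + y)`, and `x ↦ n • x` pushes Lebesgue measure on `[0,1]` to Haar measure on
the circle for every `n ≠ 0`. Hence for `A = [0,1] × J` the events `y ∈ J` and `n • x + y ∈ J` are
independent, `μ(T⁻ⁿ A ∩ A) = μ(A)²` for all `n ≥ 1`, and any `J` of measure below `α` works.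
-/

open MeasureTheory Filter Topology

/-- The twist map on `[0,1] × ℝ/ℤ`. -/
noncomputable def twist (p : Set.Icc (0:ℝ) 1 × AddCircle (1:ℝ)) :
    Set.Icc (0:ℝ) 1 × AddCircle (1:ℝ) :=
  (p.1, ((p.1 : ℝ) : AddCircle (1:ℝ)) + p.2)

section SkewProduct

variable {X G : Type*} [MeasurableSpace X] [MeasurableSpace G] [AddGroup G] [MeasurableAdd₂ G]
  {μ : Measure X} {ν : Measure G} [SFinite μ] [SFinite ν] [ν.IsAddRightInvariant]

theorem measure_prod_setOf_add_mem_and_mem {f : X → G} (hf : MeasurePreserving f μ ν)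
    {J K : Set G} (hJ : MeasurableSet J) (hK : MeasurableSet K) :
    μ.prod ν {p | f p.1 + p.2 ∈ J ∧ p.2 ∈ K} = ν J * ν K := by
  have hmeas : MeasurableSet {p : X × G | f p.1 + p.2 ∈ J ∧ p.2 ∈ K} :=
    ((hf.measurable.comp measurable_fst).add measurable_snd hJ).inter (measurable_snd hK)
  have hfiber : ∀ y, μ ((fun x => (x, y)) ⁻¹' {p : X × G | f p.1 + p.2 ∈ J ∧ p.2 ∈ K})
      = K.indicator (fun _ => ν J) y := by
    intro y
    by_cases hy : y ∈ K
    · have hset : (fun x => (x, y)) ⁻¹' {p : X × G | f p.1 + p.2 ∈ J ∧ p.2 ∈ K}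
          = f ⁻¹' ((· + y) ⁻¹' J) := by
        ext x; simp [hy]
      rw [hset, hf.measure_preimage (hJ.preimage (measurable_add_const y)).nullMeasurableSet,
        measure_preimage_add_right, Set.indicator_of_mem hy]
    · simp [hy]
  rw [Measure.prod_apply_symm hmeas]
  simp_rw [hfiber]
  rw [lintegral_indicator_const hK]

end SkewProduct

theorem measurePreserving_coe_Icc_addCircle :
    MeasurePreserving (fun x : Set.Icc (0:ℝ) 1 => ((x : ℝ) : AddCircle (1:ℝ))) volume volume := by
  have hval : MeasurePreserving (Subtype.val : Set.Icc (0:ℝ) 1 → ℝ) volume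
      (volume.restrict (Set.Icc 0 1)) :=
    ⟨measurable_subtype_coe, map_comap_subtype_coe measurableSet_Icc _⟩
  rw [← Measure.restrict_congr_set Ioc_ae_eq_Icc] at hval
  have hmk := AddCircle.measurePreserving_mk 1 0
  rw [zero_add] at hmk
  exact hmk.comp hval

theorem measurePreserving_nsmul_coe_Icc_addCircle {n : ℕ} (hn : n ≠ 0) :
    MeasurePreserving (fun x : Set.Icc (0:ℝ) 1 => n • ((x : ℝ) : AddCircle (1:ℝ)))
      volume volume := by
  simpa [natCast_zsmul, Function.comp_def] using
    (Measure.measurePreserving_zsmul volume (Int.natCast_ne_zero.mpr hn)).comp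
      measurePreserving_coe_Icc_addCircle

theorem twist_iterate_apply (n : ℕ) (p : Set.Icc (0:ℝ) 1 × AddCircle (1:ℝ)) :
    twist^[n] p = (p.1, n • ((p.1 : ℝ) : AddCircle (1:ℝ)) + p.2) := by
  induction n with
  | zero => simp
  | succ n ih =>
    simp only [Function.iterate_succ_apply', ih, twist, succ_nsmul]
    congr 1
    abel

theorem volume_univ_prod (J : Set (AddCircle (1:ℝ))) :
    volume (Set.univ ×ˢ J : Set (Set.Icc (0:ℝ) 1 × AddCircle (1:ℝ))) = volume J := by
  rw [Measure.volume_eq_prod, Measure.prod_prod, measure_univ, one_mul]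

theorem volume_twist_iterate_preimage_inter {n : ℕ} (hn : n ≠ 0) {J : Set (AddCircle (1:ℝ))}
    (hJ : MeasurableSet J) :
    volume (twist^[n] ⁻¹' (Set.univ ×ˢ J) ∩ Set.univ ×ˢ J) = volume J * volume J := by
  have hset : twist^[n] ⁻¹' (Set.univ ×ˢ J) ∩ Set.univ ×ˢ J
      = {p | n • ((p.1 : ℝ) : AddCircle (1:ℝ)) + p.2 ∈ J ∧ p.2 ∈ J} := by
    ext p
    simp [twist_iterate_apply]
  rw [hset, Measure.volume_eq_prod]
  exact measure_prod_setOf_add_mem_and_mem (measurePreserving_nsmul_coe_Icc_addCircle hn) hJ hJ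

theorem AddCircle.exists_measurableSet_volume_pos_lt (T : ℝ) [Fact (0 < T)] {α : ℝ} (hα : 0 < α) :
    ∃ J : Set (AddCircle T), MeasurableSet J ∧ 0 < volume J ∧ volume J < ENNReal.ofReal α := by
  refine ⟨Metric.closedBall 0 (α / 4), Metric.isClosed_closedBall.measurableSet, ?_, ?_⟩ <;>
    rw [AddCircle.volume_closedBall]
  · exact ENNReal.ofReal_pos.mpr (lt_min (Fact.out) (by positivity))
  · exact (ENNReal.ofReal_lt_ofReal_iff hα).mpr (by linarith [min_le_right T (2 * (α / 4))])

theorem stmt_8 :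
    ∀ α : ℝ, 0 < α → ∃ A : Set (Set.Icc (0:ℝ) 1 × AddCircle (1:ℝ)),
      MeasurableSet A ∧ 0 < volume A ∧
      ∃ N : ℕ, ∀ n ≥ N, volume (twist^[n] ⁻¹' A ∩ A) < ENNReal.ofReal α * volume A := by
  intro α hα
  obtain ⟨J, hJ, hJpos, hJlt⟩ := AddCircle.exists_measurableSet_volume_pos_lt 1 hα
  refine ⟨Set.univ ×ˢ J, MeasurableSet.univ.prod hJ, by rwa [volume_univ_prod], 1, ?_⟩
  intro n hn
  rw [volume_twist_iterate_preimage_inter (by omega) hJ, volume_univ_prod]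
  exact (ENNReal.mul_lt_mul_iff_left hJpos.ne' (measure_ne_top _ _)).mpr hJlt
end

section
/- The dyadic odometer is rigid along the sequence (2^n), but not uniformly: with A_n = {x : x_{n+1} = 1}, one has μ(A_n Δ T^{2^n}(A_n)) = 1 for every n. -/
open MeasureTheory Filter Topology
open scoped ENNReal

/-!
Write `T` for the odometer. Applying `T` twice keeps the digit `x 0` and acts on the tail
`(x 1, x 2, …)` as `T`, so by induction `T^[2 ^ n]` fixes the digits below `n` and flips digit
`n`. Hence cylinders on the first `k ≤ n` digits are `T^[2 ^ n]`-invariant, while `T^[2 ^ n]`,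
being surjective (subtraction of 1 with borrow is a right inverse of `T`), maps `{x | x n = b}`
onto its complement.
-/

/-- The dyadic odometer: addition of 1 with carry, least significant digit first. -/
def odometer (x : ℕ → Bool) : ℕ → Bool :=
  fun n => if ∀ i < n, x i = true then !(x n) else x n

def odometerInv (x : ℕ → Bool) : ℕ → Bool :=
  fun n => if ∀ i < n, x i = false then !(x n) else x n

lemma odometer_apply_zero (x : ℕ → Bool) : odometer x 0 = !x 0 := by
  simp [odometer]

lemma odometer_apply_succ (x : ℕ → Bool) (i : ℕ) :
    odometer x (i + 1) = if x 0 then odometer (fun j => x (j + 1)) i else x (i + 1) := by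
  simp only [odometer, Nat.forall_lt_succ_left]
  cases x 0 <;> simp

lemma odometer_odometer_apply_zero (x : ℕ → Bool) : odometer (odometer x) 0 = x 0 := by
  simp [odometer_apply_zero]

lemma odometer_odometer_apply_succ (x : ℕ → Bool) (i : ℕ) :
    odometer (odometer x) (i + 1) = odometer (fun j => x (j + 1)) i := by
  cases h : x 0
  · simp [odometer_apply_succ, odometer_apply_zero, h]
  · simp [odometer_apply_succ (odometer x), odometer_apply_zero, h, odometer_apply_succ x]

lemma odometer_iterate_two_mul_apply_zero (m : ℕ) (x : ℕ → Bool) :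
    odometer^[2 * m] x 0 = x 0 := by
  have h : Function.Semiconj (fun x : ℕ → Bool => x 0) odometer^[2] id :=
    odometer_odometer_apply_zero
  simpa [Function.iterate_mul] using h.iterate_right m x

lemma odometer_iterate_two_mul_apply_succ (m : ℕ) (x : ℕ → Bool) (i : ℕ) :
    odometer^[2 * m] x (i + 1) = odometer^[m] (fun j => x (j + 1)) i := by
  have h : Function.Semiconj (fun (x : ℕ → Bool) j => x (j + 1)) odometer^[2] odometer :=
    fun x => funext (odometer_odometer_apply_succ x)
  rw [Function.iterate_mul]
  exact congrFun (h.iterate_right m x) i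

lemma odometer_iterate_two_pow_apply_of_lt {n i : ℕ} (h : i < n) (x : ℕ → Bool) :
    odometer^[2 ^ n] x i = x i := by
  induction n generalizing i x with
  | zero => omega
  | succ n ih =>
    rw [pow_succ']
    cases i with
    | zero => exact odometer_iterate_two_mul_apply_zero _ x
    | succ i => rw [odometer_iterate_two_mul_apply_succ, ih (by omega)]

lemma odometer_iterate_two_pow_apply_self (n : ℕ) (x : ℕ → Bool) :
    odometer^[2 ^ n] x n = !x n := by
  induction n generalizing x with
  | zero => exact odometer_apply_zero x
  | succ n ih => rw [pow_succ', odometer_iterate_two_mul_apply_succ, ih]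

lemma forall_lt_odometerInv_eq_true_iff (x : ℕ → Bool) (n : ℕ) :
    (∀ i < n, odometerInv x i = true) ↔ ∀ i < n, x i = false := by
  induction n with
  | zero => simp
  | succ n ih =>
    rw [Nat.forall_lt_succ_right, Nat.forall_lt_succ_right, ih]
    refine and_congr_right fun h => ?_
    simp [odometerInv, if_pos h]

lemma odometer_odometerInv (x : ℕ → Bool) : odometer (odometerInv x) = x := by
  funext n
  simp only [odometer, forall_lt_odometerInv_eq_true_iff]
  by_cases h : ∀ i < n, x i = false
  · rw [if_pos h, odometerInv, if_pos h, Bool.not_not]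
  · rw [if_neg h, odometerInv, if_neg h]

lemma odometer_surjective : Function.Surjective odometer :=
  Function.RightInverse.surjective odometer_odometerInv

lemma odometer_iterate_two_pow_preimage_cylinder {k n : ℕ} (hkn : k ≤ n) (b : ℕ → Bool) :
    odometer^[2 ^ n] ⁻¹' {x | ∀ i < k, x i = b i} = {x | ∀ i < k, x i = b i} := by
  ext x
  simp +contextual only [Set.mem_preimage, Set.mem_ofPred_eq,
    odometer_iterate_two_pow_apply_of_lt (lt_of_lt_of_le _ hkn)]

lemma odometer_iterate_two_pow_image_setOf_apply_eq (n : ℕ) (b : Bool) :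
    odometer^[2 ^ n] '' {x | x n = b} = {x | x n = !b} := by
  have h : {x : ℕ → Bool | x n = b} = odometer^[2 ^ n] ⁻¹' {x | x n = !b} := by
    ext x
    simp [odometer_iterate_two_pow_apply_self]
  rw [h, Set.image_preimage_eq _ (odometer_surjective.iterate _)]

theorem stmt_10_general (μ : Measure (ℕ → Bool)) [IsProbabilityMeasure μ] :
    (∀ (k : ℕ) (b : ℕ → Bool), ∀ n ≥ k,
      μ (symmDiff (odometer^[2 ^ n] ⁻¹' {x : ℕ → Bool | ∀ i < k, x i = b i})
        {x : ℕ → Bool | ∀ i < k, x i = b i}) = 0) ∧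
    (∀ n : ℕ,
      μ (symmDiff {x : ℕ → Bool | x n = true}
        (odometer^[2 ^ n] '' {x : ℕ → Bool | x n = true})) = 1) := by
  refine ⟨fun k b n hkn => ?_, fun n => ?_⟩
  · rw [odometer_iterate_two_pow_preimage_cylinder hkn, symmDiff_self, Set.bot_eq_empty,
      measure_empty]
  · have hcompl : symmDiff {x : ℕ → Bool | x n = true} {x | x n = false} = Set.univ := by
      ext x
      cases h : x n <;> simp [Set.mem_symmDiff, h]
    rw [odometer_iterate_two_pow_image_setOf_apply_eq, Bool.not_true, hcompl, measure_univ]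

theorem stmt_10 (μ : Measure (ℕ → Bool)) [IsProbabilityMeasure μ]
    (hcyl : ∀ (k : ℕ) (b : ℕ → Bool),
      μ {x : ℕ → Bool | ∀ i < k, x i = b i} = (1 / 2 : ℝ≥0∞) ^ k) :
    (∀ (k : ℕ) (b : ℕ → Bool), ∀ n ≥ k,
      μ (symmDiff (odometer^[2 ^ n] ⁻¹' {x : ℕ → Bool | ∀ i < k, x i = b i})
        {x : ℕ → Bool | ∀ i < k, x i = b i}) = 0) ∧
    (∀ n : ℕ,
      μ (symmDiff {x : ℕ → Bool | x n = true}
        (odometer^[2 ^ n] '' {x : ℕ → Bool | x n = true})) = 1) :=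
  stmt_10_general μ
end

section
/- Let the sequence (S_k) be defined by S_0 = 1 and S_k = S_{k−1} + S_{max(k−5,0)}. Then for all sufficiently large k: S_{k+3} = S_{k+2} + S_{k−2}, and S_{k+3} = S_{k+1} + S_k + c_k where c_k = 1 if k ≡ 0 or 5 (mod 6), c_k = −1 if k ≡ 2 or 3 (mod 6), and c_k = 0 if k ≡ 1 or 4 (mod 6). -/
theorem stmt_13 (S : ℕ → ℕ) (hS0 : S 0 = 1)
    (hSrec : ∀ k : ℕ, 1 ≤ k → S k = S (k - 1) + S (k - 5)) :
    ∃ K : ℕ, ∀ k ≥ K,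
      S (k + 3) = S (k + 2) + S (k - 2) ∧
      (S (k + 3) : ℤ) = (S (k + 1) : ℤ) + (S k : ℤ) +
        (if k % 6 = 0 ∨ k % 6 = 5 then 1
         else if k % 6 = 2 ∨ k % 6 = 3 then -1 else 0) := by
  -- explicit small values
  have h1 : S 1 = 2 := by have h := hSrec 1 (by norm_num); norm_num [hS0] at h; omega
  have h2 : S 2 = 3 := by have h := hSrec 2 (by norm_num); norm_num [hS0, h1] at h; omega
  have h3 : S 3 = 4 := by have h := hSrec 3 (by norm_num); norm_num [hS0, h2] at h; omega
  have h4 : S 4 = 5 := by have h := hSrec 4 (by norm_num); norm_num [hS0, h3] at h; omega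
  have h5 : S 5 = 6 := by have h := hSrec 5 (by norm_num); norm_num [hS0, h4] at h; omega
  have h6 : S 6 = 8 := by have h := hSrec 6 (by norm_num); norm_num [h1, h5] at h; omega
  have h7 : S 7 = 11 := by have h := hSrec 7 (by norm_num); norm_num [h2, h6] at h; omega
  have h8 : S 8 = 15 := by have h := hSrec 8 (by norm_num); norm_num [h3, h7] at h; omega
  -- periodicity of the defect
  have key : ∀ m : ℕ, (S (m+9) : ℤ) - S (m+7) - S (m+6)
      = (S (m+3) : ℤ) - S (m+1) - S m := by
    intro m
    have h9' := hSrec (m+9) (by omega)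
    have h8' := hSrec (m+8) (by omega)
    have h6' := hSrec (m+6) (by omega)
    have h5' := hSrec (m+5) (by omega)
    simp only [show m+9-1 = m+8 by omega, show m+9-5 = m+4 by omega,
      show m+8-1 = m+7 by omega, show m+8-5 = m+3 by omega,
      show m+6-1 = m+5 by omega, show m+6-5 = m+1 by omega,
      show m+5-1 = m+4 by omega, show m+5-5 = m by omega] at h9' h8' h6' h5'
    omega
  have main : ∀ k : ℕ, (S (k + 3) : ℤ) = (S (k + 1) : ℤ) + (S k : ℤ) +
      (if k % 6 = 0 ∨ k % 6 = 5 then 1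
       else if k % 6 = 2 ∨ k % 6 = 3 then -1 else 0) := by
    intro k
    induction k using Nat.strong_induction_on with
    | _ k ih =>
      by_cases hk : k < 6
      · interval_cases k <;> norm_num [hS0, h1, h2, h3, h4, h5, h6, h7, h8]
      · obtain ⟨m, rfl⟩ : ∃ m, k = m + 6 := ⟨k - 6, by omega⟩
        have hih := ih m (by omega)
        have hkey := key m
        have hmod : (m + 6) % 6 = m % 6 := by omega
        rw [hmod]
        set c : ℤ := (if m % 6 = 0 ∨ m % 6 = 5 then 1
          else if m % 6 = 2 ∨ m % 6 = 3 then -1 else 0) with hc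
        have : (m + 6 + 3) = m + 9 := by ring
        rw [this, show m + 6 + 1 = m + 7 by ring]
        omega
  refine ⟨2, fun k hk => ⟨?_, main k⟩⟩
  have h := hSrec (k + 3) (by omega)
  simpa [show k+3-1 = k+2 by omega, show k+3-5 = k-2 by omega] using h
end

section
/- Suppose every ergodic T-invariant Borel probability measure of a topological dynamical system (X, T) is rigid along the same sequence (t_n). Then every T-invariant Borel probability measure is rigid along (t_n). -/
/-!
Disintegrate `μ` along the σ-algebra of `T`-invariant sets: with `κ = condExpKernel μ (invariants T)`
we have `μ s = ∫⁻ ω, κ ω s ∂μ`, so once `κ ω` is ergodic for `μ`-a.e. `ω`, rigidity of each `κ ω`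
passes to `μ` by dominated convergence.

Ergodicity of `κ ω` is tested on a countable generating π-system `P`. For `s ∈ P`, the mean ergodic
theorem in `L²(μ)` gives Birkhoff averages of `1_s` converging `μ`-a.e. along a subsequence to an
invariant function; being measurable for the invariant σ-algebra, that limit is `κ ω`-a.e. constant.
Integrating the averages over a `κ ω`-invariant set `B` then yields `κ ω (s ∩ B) = κ ω s * κ ω B`,
hence `κ ω B ∈ {0, 1}`.
-/

open MeasureTheory Filter Topology ProbabilityTheory
open scoped ENNReal

theorem exists_countable_isPiSystem_generateFrom (X : Type*) [m : MeasurableSpace X]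
    [MeasurableSpace.CountablyGenerated X] :
    ∃ P : Set (Set X), P.Countable ∧ IsPiSystem P ∧ m = MeasurableSpace.generateFrom P := by
  classical
  have : Countable (MeasurableSpace.countableGeneratingSet X) :=
    MeasurableSpace.countable_countableGeneratingSet.to_subtype
  refine ⟨Set.range fun F : Finset (MeasurableSpace.countableGeneratingSet X) =>
    ⋂ s ∈ F, (s : Set X), Set.countable_range _, ?_, le_antisymm ?_ ?_⟩
  · rintro _ ⟨F, rfl⟩ _ ⟨G, rfl⟩ -
    exact ⟨F ∪ G, by simp only [Finset.coe_union, ← Finset.mem_coe, Set.biInter_union]⟩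
  · conv_lhs => rw [← MeasurableSpace.generateFrom_countableGeneratingSet (α := X)]
    exact MeasurableSpace.generateFrom_mono fun s hs => ⟨{⟨s, hs⟩}, by simp⟩
  · refine MeasurableSpace.generateFrom_le ?_
    rintro _ ⟨F, rfl⟩
    exact .biInter F.countable_toSet fun s _ =>
      MeasurableSpace.measurableSet_countableGeneratingSet s.2

theorem norm_birkhoffAverage_le {X E : Type*} [NormedAddCommGroup E] [NormedSpace ℝ E]
    {T : X → X} {g : X → E} {C : ℝ} (hg : ∀ x, ‖g x‖ ≤ C) (N : ℕ) (x : X) :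
    ‖birkhoffAverage ℝ T g N x‖ ≤ C := by
  rcases Nat.eq_zero_or_pos N with rfl | hN
  · simpa using (norm_nonneg _).trans (hg x)
  have hsum : ‖birkhoffSum T g N x‖ ≤ N * C := by
    simpa [birkhoffSum] using norm_sum_le_of_le (Finset.range N) fun k _ => hg (T^[k] x)
  rw [birkhoffAverage, norm_smul, norm_inv, Real.norm_natCast, inv_mul_le_iff₀ (by positivity)]
  exact hsum

section Birkhoff

variable {X : Type*} [MeasurableSpace X] {T : X → X} {μ : Measure X}

theorem Measurable.birkhoffAverage (hT : Measurable T) {g : X → ℝ} (hg : Measurable g) (N : ℕ) :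
    Measurable (birkhoffAverage ℝ T g N) :=
  ((Finset.measurable_sum (f := fun k x => g (T^[k] x)) _ fun k _ =>
    hg.comp (hT.iterate k)).const_smul (N : ℝ)⁻¹ :)

theorem MeasureTheory.Lp.coeFn_birkhoffAverage_compMeasurePreserving {p : ℝ≥0∞}
    (hT : MeasurePreserving T μ μ) (F : Lp ℝ p μ) (N : ℕ) :
    ⇑(birkhoffAverage ℝ (compMeasurePreserving T hT) id N F) =ᵐ[μ] birkhoffAverage ℝ T F N := by
  have hsum : ∀ N, ⇑(birkhoffSum (compMeasurePreserving T hT) id N F) =ᵐ[μ]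
      birkhoffSum T F N := by
    intro N
    induction N with
    | zero => simpa using coeFn_zero ℝ p μ
    | succ N ih =>
      have hiter : ⇑((compMeasurePreserving T hT)^[N] F) =ᵐ[μ] F ∘ T^[N] := by
        rw [compMeasurePreserving_iterate hT N]
        exact coeFn_compMeasurePreserving F (hT.iterate N)
      rw [birkhoffSum_succ, id]
      filter_upwards [coeFn_add (birkhoffSum (compMeasurePreserving T hT) id N F)
        ((compMeasurePreserving T hT)^[N] F), ih, hiter] with x h1 h2 h3
      rw [h1, Pi.add_apply, h2, h3, birkhoffSum_succ]
      rfl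
  filter_upwards [coeFn_smul (N : ℝ)⁻¹ (birkhoffSum (compMeasurePreserving T hT) id N F),
    hsum N] with x h1 h2
  rw [_root_.birkhoffAverage, h1, Pi.smul_apply, h2]
  rfl

theorem MeasureTheory.Measure.QuasiMeasurePreserving.exists_measurable_invariants_ae_eq
    (hT : QuasiMeasurePreserving T μ μ) {g : X → ℝ} (hg : Measurable g) (hgT : g ∘ T =ᵐ[μ] g) :
    ∃ g' : X → ℝ, Measurable[MeasurableSpace.invariants T] g' ∧ g' =ᵐ[μ] g := by
  have hiter : ∀ n, g ∘ T^[n] =ᵐ[μ] g := by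
    intro n
    induction n with
    | zero => rfl
    | succ n ih =>
      rw [Function.iterate_succ, ← Function.comp_assoc]
      exact (hT.ae_eq_comp ih).trans hgT
  refine ⟨fun x => limsup (fun n => g (T^[n] x)) atTop,
    MeasurableSpace.measurable_invariants_dom.2 ⟨?_, fun s _ => ?_⟩, ?_⟩
  · exact Measurable.limsup fun n => hg.comp (hT.measurable.iterate n)
  · congr 1
    funext x
    simp only [Function.comp_apply, ← Function.iterate_succ_apply]
    exact limsup_nat_add (fun n => g (T^[n] x)) 1
  · filter_upwards [ae_all_iff.2 hiter] with x hx
    simp only [fun n => show g (T^[n] x) = g x from hx n, limsup_const]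

namespace MeasureTheory.MeasurePreserving

theorem exists_subseq_tendsto_birkhoffAverage (hT : MeasurePreserving T μ μ) {f : X → ℝ}
    (hf : MemLp f 2 μ) :
    ∃ φ : ℕ → ℕ, StrictMono φ ∧ ∃ g : X → ℝ, Measurable[MeasurableSpace.invariants T] g ∧
      ∀ᵐ x ∂μ, Tendsto (fun k => birkhoffAverage ℝ T f (φ k) x) atTop (𝓝 (g x)) := by
  set K := (Lp.compMeasurePreservingₗᵢ ℝ T hT : Lp ℝ 2 μ →ₗᵢ[ℝ] Lp ℝ 2 μ).toContinuousLinearMap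
  set L : Lp ℝ 2 μ :=
    ↑((K.eqLocus (1 : Lp ℝ 2 μ →L[ℝ] Lp ℝ 2 μ)).orthogonalProjectionOnto (hf.toLp f))
  have hKL : Lp.compMeasurePreserving T hT L = L :=
    ((K.eqLocus (1 : Lp ℝ 2 μ →L[ℝ] Lp ℝ 2 μ)).orthogonalProjectionOnto (hf.toLp f)).2
  obtain ⟨φ, hφ, hconv⟩ := (tendstoInMeasure_of_tendsto_Lp
    (K.tendsto_birkhoffAverage_orthogonalProjection
      (LinearIsometry.norm_toContinuousLinearMap_le _) (hf.toLp f))).exists_seq_tendsto_ae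
  have hLT : (L : X → ℝ) ∘ T =ᵐ[μ] L := by
    simpa only [hKL] using (Lp.coeFn_compMeasurePreserving L hT).symm
  obtain ⟨g, hg, hgL⟩ := hT.quasiMeasurePreserving.exists_measurable_invariants_ae_eq
    (Lp.stronglyMeasurable _).measurable hLT
  have hbirk : ∀ N, ⇑(birkhoffAverage ℝ K id N (hf.toLp f)) =ᵐ[μ] birkhoffAverage ℝ T f N :=
    fun N => (Lp.coeFn_birkhoffAverage_compMeasurePreserving hT _ N).trans
      (hT.quasiMeasurePreserving.birkhoffAverage_ae_eq_of_ae_eq ℝ hf.coeFn_toLp N)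
  refine ⟨φ, hφ, g, hg, ?_⟩
  filter_upwards [hconv, hgL, ae_all_iff.2 hbirk] with x hx hgx hbx
  rw [hgx]
  simpa only [hbx] using hx

theorem setIntegral_birkhoffAverage (hT : MeasurePreserving T μ μ) {f : X → ℝ}
    (hf : Integrable f μ) {B : Set X} (hB : MeasurableSet B) (hTB : T ⁻¹' B = B) {N : ℕ}
    (hN : N ≠ 0) : ∫ x in B, birkhoffAverage ℝ T f N x ∂μ = ∫ x in B, f x ∂μ := by
  have hterm : ∀ k, ∫ x in B, f (T^[k] x) ∂μ = ∫ x in B, f x ∂μ := fun k => by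
    have hTk := hT.iterate k
    calc ∫ x in B, f (T^[k] x) ∂μ = ∫ x in T^[k] ⁻¹' B, f (T^[k] x) ∂μ := by
          rw [Function.IsFixedPt.preimage_iterate hTB k]
      _ = ∫ x in B, f x ∂μ.map T^[k] :=
          (setIntegral_map hB (by rw [hTk.map_eq]; exact hf.aestronglyMeasurable)
            hTk.measurable.aemeasurable).symm
      _ = ∫ x in B, f x ∂μ := by rw [hTk.map_eq]
  have hint : ∀ k, IntegrableOn (fun x => f (T^[k] x)) B μ := fun k =>
    ((hT.iterate k).integrable_comp_of_integrable hf).integrableOn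
  simp only [birkhoffAverage, birkhoffSum, smul_eq_mul]
  rw [integral_const_mul, integral_finsetSum _ fun k _ => hint k]
  simp [hterm, hN]

theorem measure_inter_eq_mul_of_tendsto_birkhoffAverage [IsProbabilityMeasure μ]
    (hT : MeasurePreserving T μ μ) {s : Set X} (hs : MeasurableSet s) {φ : ℕ → ℕ}
    (hφ : Tendsto φ atTop atTop) {c : ℝ}
    (hc : ∀ᵐ x ∂μ, Tendsto (fun k => birkhoffAverage ℝ T (s.indicator 1) (φ k) x) atTop (𝓝 c))
    {B : Set X} (hB : MeasurableSet B) (hTB : T ⁻¹' B = B) : μ (s ∩ B) = μ s * μ B := by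
  have key : ∀ B, MeasurableSet B → T ⁻¹' B = B → μ.real (s ∩ B) = c * μ.real B := by
    intro B hB hTB
    have hlim : Tendsto (fun k => ∫ x in B, birkhoffAverage ℝ T (s.indicator 1) (φ k) x ∂μ)
        atTop (𝓝 (∫ _ in B, c ∂μ)) := by
      refine tendsto_integral_of_dominated_convergence (fun _ => 1) (fun k => ?_)
        (integrable_const 1) (fun k => ae_of_all _ fun x => ?_) (ae_restrict_of_ae hc)
      · exact (hT.measurable.birkhoffAverage (measurable_one.indicator hs) _).aestronglyMeasurable
      · exact norm_birkhoffAverage_le (fun y => by by_cases hy : y ∈ s <;> simp [hy]) _ _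
    have heq : ∀ᶠ k in atTop, ∫ x in B, birkhoffAverage ℝ T (s.indicator 1) (φ k) x ∂μ
        = μ.real (s ∩ B) := (hφ.eventually_ne_atTop 0).mono fun k hk => by
      rw [hT.setIntegral_birkhoffAverage (f := s.indicator 1) ((integrable_const 1).indicator hs)
        hB hTB hk, integral_indicator_one hs, measureReal_restrict_apply hs]
    rw [setIntegral_const, smul_eq_mul, mul_comm] at hlim
    exact tendsto_nhds_unique (tendsto_const_nhds.congr' (heq.mono fun _ h => h.symm)) hlim
  have hc_eq : c = μ.real s := by simpa using (key Set.univ .univ rfl).symm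
  rw [← ENNReal.toReal_eq_toReal_iff' (measure_ne_top _ _) (by finiteness), ENNReal.toReal_mul]
  exact (key B hB hTB).trans (by rw [hc_eq]; rfl)

theorem ergodic_of_tendsto_birkhoffAverage [IsProbabilityMeasure μ]
    (hT : MeasurePreserving T μ μ) {P : Set (Set X)}
    (hgen : ‹MeasurableSpace X› = MeasurableSpace.generateFrom P) (hP : IsPiSystem P)
    (h : ∀ s ∈ P, ∃ φ : ℕ → ℕ, Tendsto φ atTop atTop ∧ ∃ c : ℝ, ∀ᵐ x ∂μ,
      Tendsto (fun k => birkhoffAverage ℝ T (s.indicator 1) (φ k) x) atTop (𝓝 c)) :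
    Ergodic T μ := by
  refine ⟨hT, ⟨fun B hB hTB => ?_⟩⟩
  have hrestrict : μ.restrict B = μ B • μ := by
    refine ext_of_generate_finite P hgen hP (fun s hs => ?_) (by simp)
    have hsm : MeasurableSet s := by rw [hgen]; exact .basic s hs
    obtain ⟨φ, hφ, c, hc⟩ := h s hs
    rw [Measure.restrict_apply hsm, Measure.smul_apply, smul_eq_mul, mul_comm,
      hT.measure_inter_eq_mul_of_tendsto_birkhoffAverage hsm hφ hc hB hTB]
  have hzero : μ B * μ Bᶜ = 0 := by
    simpa [Measure.restrict_apply hB.compl] using congr($hrestrict Bᶜ).symm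
  rw [eventuallyConst_set']
  rcases mul_eq_zero.1 hzero with h0 | h0
  · exact .inl (ae_eq_empty.2 h0)
  · exact .inr (ae_eq_univ.2 h0)

end MeasureTheory.MeasurePreserving

end Birkhoff

section CondExpKernel

variable {Ω : Type*} {m : MeasurableSpace Ω} [mΩ : MeasurableSpace Ω] [StandardBorelSpace Ω]
  {μ : Measure Ω} [IsFiniteMeasure μ]

omit [StandardBorelSpace Ω] in
theorem measurable_diag_of_le (hm : m ≤ mΩ) : Measurable[mΩ, m.prod mΩ] Function.diag :=
  (measurable_id'' hm).prodMk measurable_id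

theorem lintegral_condExpKernel_apply (hm : m ≤ mΩ) {s : Set Ω} (hs : MeasurableSet s) :
    ∫⁻ ω, condExpKernel μ m ω s ∂μ = μ s := by
  rw [← lintegral_trim hm ((condExpKernel μ m).measurable_coe hs)]
  conv_rhs => rw [← condExpKernel_comp_trim (μ := μ) hm]
  rw [Measure.bind_apply hs (Kernel.aemeasurable _)]

theorem setLIntegral_trim_condExpKernel_apply (hm : m ≤ mΩ) {B s : Set Ω}
    (hB : MeasurableSet[m] B) (hs : MeasurableSet s) :
    ∫⁻ ω in B, condExpKernel μ m ω s ∂μ.trim hm = μ (B ∩ s) := by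
  rw [← Measure.compProd_apply_prod hB hs, compProd_trim_condExpKernel hm,
    Measure.map_apply (measurable_diag_of_le hm) (hB.prod hs)]
  rfl

theorem ae_ae_condExpKernel_of_ae (hm : m ≤ mΩ) {p : Ω → Prop} (h : ∀ᵐ x ∂μ, p x) :
    ∀ᵐ ω ∂μ, ∀ᵐ x ∂condExpKernel μ m ω, p x :=
  ae_of_ae_trim hm (Measure.ae_ae_of_ae_comp (by rwa [condExpKernel_comp_trim hm]))

theorem ae_ae_condExpKernel_eq_of_measurable (hm : m ≤ mΩ) {β : Type*} [MeasurableSpace β]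
    [MeasurableEq β] {h : Ω → β} (hh : Measurable[m] h) :
    ∀ᵐ ω ∂μ, ∀ᵐ x ∂condExpKernel μ m ω, h x = h ω := by
  have hS : MeasurableSet[m.prod mΩ] {p : Ω × Ω | h p.2 = h p.1} :=
    measurableSet_eq_fun ((hh.mono hm le_rfl).comp measurable_snd) (hh.comp measurable_fst)
  have hdiag : ∀ᵐ p ∂(μ.trim hm ⊗ₘ condExpKernel μ m), h p.2 = h p.1 := by
    rw [compProd_trim_condExpKernel hm]
    -- the σ-algebra on `Ω × Ω` is `m.prod mΩ`, not the one instance search would find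
    exact (@ae_map_iff _ _ _ (m.prod mΩ) _ _
      (@Measurable.aemeasurable _ _ _ (m.prod mΩ) _ _ (measurable_diag_of_le hm)) _ hS).2
      (ae_of_all _ fun _ => rfl)
  exact ae_of_ae_trim hm (Measure.ae_ae_of_ae_compProd hdiag)

theorem tendsto_measure_of_ae_tendsto_condExpKernel (hm : m ≤ mΩ) {s : ℕ → Set Ω}
    (hs : ∀ n, MeasurableSet (s n))
    (h : ∀ᵐ ω ∂μ, Tendsto (fun n => condExpKernel μ m ω (s n)) atTop (𝓝 0)) :
    Tendsto (fun n => μ (s n)) atTop (𝓝 0) := by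
  have hdom := tendsto_lintegral_of_dominated_convergence 1
    (fun n => ((condExpKernel μ m).measurable_coe (hs n)).mono hm le_rfl)
    (fun n => ae_of_all _ fun ω => prob_le_one) (by simp [measure_ne_top]) h
  simpa only [lintegral_condExpKernel_apply hm (hs _), lintegral_zero] using hdom

variable {T : Ω → Ω}

theorem ae_condExpKernel_invariants_preimage_eq (hT : MeasurePreserving T μ μ) {s : Set Ω}
    (hs : MeasurableSet s) :
    ∀ᵐ ω ∂μ, condExpKernel μ (.invariants T) ω (T ⁻¹' s) = condExpKernel μ (.invariants T) ω s := by
  have hle := MeasurableSpace.invariants_le T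
  refine ae_of_ae_trim hle (ae_eq_of_forall_setLIntegral_eq_of_sigmaFinite
    (Kernel.measurable_coe _ (hT.measurable hs)) (Kernel.measurable_coe _ hs) fun B hB _ => ?_)
  rw [setLIntegral_trim_condExpKernel_apply hle hB (hT.measurable hs),
    setLIntegral_trim_condExpKernel_apply hle hB hs, ← hB.2, ← Set.preimage_inter,
    hT.measure_preimage ((hle B hB).inter hs).nullMeasurableSet, hB.2]

theorem ae_exists_tendsto_birkhoffAverage_condExpKernel (hT : MeasurePreserving T μ μ)
    {s : Set Ω} (hs : MeasurableSet s) :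
    ∀ᵐ ω ∂μ, ∃ φ : ℕ → ℕ, Tendsto φ atTop atTop ∧ ∃ c : ℝ,
      ∀ᵐ x ∂condExpKernel μ (.invariants T) ω,
        Tendsto (fun k => birkhoffAverage ℝ T (s.indicator 1) (φ k) x) atTop (𝓝 c) := by
  have hle := MeasurableSpace.invariants_le T
  obtain ⟨φ, hφ, g, hg, hconv⟩ :=
    hT.exists_subseq_tendsto_birkhoffAverage (f := s.indicator 1) ((memLp_const 1).indicator hs)
  filter_upwards [ae_ae_condExpKernel_of_ae hle hconv,
    ae_ae_condExpKernel_eq_of_measurable hle hg] with ω hconvω hgω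
  refine ⟨φ, hφ.tendsto_atTop, g ω, ?_⟩
  filter_upwards [hconvω, hgω] with x hx hgx
  rwa [hgx] at hx

theorem ae_ergodic_condExpKernel_invariants (hT : MeasurePreserving T μ μ) :
    ∀ᵐ ω ∂μ, Ergodic T (condExpKernel μ (.invariants T) ω) := by
  obtain ⟨P, hPc, hP, hgen⟩ := exists_countable_isPiSystem_generateFrom Ω
  have hPm : ∀ s ∈ P, MeasurableSet s := fun s hs => by rw [hgen]; exact .basic s hs
  filter_upwards [(ae_ball_iff hPc).2 fun s hs => ae_condExpKernel_invariants_preimage_eq hT (hPm s hs),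
    (ae_ball_iff hPc).2 fun s hs => ae_exists_tendsto_birkhoffAverage_condExpKernel hT (hPm s hs)]
    with ω hpres hbirk
  refine MeasurePreserving.ergodic_of_tendsto_birkhoffAverage ⟨hT.measurable, ?_⟩ hgen hP hbirk
  refine ext_of_generate_finite P hgen hP (fun s hs => ?_) ?_
  · rw [Measure.map_apply hT.measurable (hPm s hs), hpres s hs]
  · rw [Measure.map_apply hT.measurable .univ, Set.preimage_univ]

end CondExpKernel

theorem stmt_16_general {X : Type*} [MetricSpace X] [CompactSpace X] [MeasurableSpace X] [BorelSpace X]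
    (T : X → X) (hT : Continuous T) (t : ℕ → ℕ)
    (hrig : ∀ μ : Measure X, IsProbabilityMeasure μ → Ergodic T μ →
      ∀ A : Set X, MeasurableSet A →
        Tendsto (fun n => μ (symmDiff (T^[t n] ⁻¹' A) A)) atTop (𝓝 0)) :
    ∀ μ : Measure X, IsProbabilityMeasure μ → MeasurePreserving T μ μ →
      ∀ A : Set X, MeasurableSet A →
        Tendsto (fun n => μ (symmDiff (T^[t n] ⁻¹' A) A)) atTop (𝓝 0) := by
  intro μ _ hμT A hA
  refine tendsto_measure_of_ae_tendsto_condExpKernel (MeasurableSpace.invariants_le T)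
    (fun n => ((hT.measurable.iterate (t n)) hA).symmDiff hA) ?_
  filter_upwards [ae_ergodic_condExpKernel_invariants hμT] with ω hω
  exact hrig _ inferInstance hω A hA

theorem stmt_16 {X : Type*} [MetricSpace X] [CompactSpace X] [MeasurableSpace X] [BorelSpace X]
    (T : X → X) (hT : Continuous T) (t : ℕ → ℕ) (ht : Tendsto t atTop atTop)
    (hrig : ∀ μ : Measure X, IsProbabilityMeasure μ → Ergodic T μ →
      ∀ A : Set X, MeasurableSet A →
        Tendsto (fun n => μ (symmDiff (T^[t n] ⁻¹' A) A)) atTop (𝓝 0)) :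
    ∀ μ : Measure X, IsProbabilityMeasure μ → MeasurePreserving T μ μ →
      ∀ A : Set X, MeasurableSet A →
        Tendsto (fun n => μ (symmDiff (T^[t n] ⁻¹' A) A)) atTop (𝓝 0) :=
  stmt_16_general T hT t hrig
end
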